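/- If G is a 2-regular graph, then α(G) ≤ (3/2)·γ(G), i.e., 2·α(G) ≤ 3·γ(G). -/

import Mathlib

open Finset

variable {V : Type*}

/-- A finset is independent in `G` : no two of its vertices are adjacent. -/
def IsIndepFinset (G : SimpleGraph V) (S : Finset V) : Prop :=
  ∀ u ∈ S, ∀ v ∈ S, ¬ G.Adj u v

/-- A finset dominates `G` : every vertex outside it has a neighbour inside it. -/
def IsDomFinset (G : SimpleGraph V) (D : Finset V) : Prop :=
  ∀ v, v ∉ D → ∃ u ∈ D, G.Adj u v

/-- The independence number of `G`. -/
noncomputable def indepNum [Fintype V] (G : SimpleGraph V) : ℕ :=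
  sSup {n | ∃ S : Finset V, IsIndepFinset G S ∧ S.card = n}

/-- The domination number of `G`. -/
noncomputable def domNum [Fintype V] (G : SimpleGraph V) : ℕ :=
  sInf {n | ∃ D : Finset V, IsDomFinset G D ∧ D.card = n}

/-- `G` is `K_{1,r}`-free: no vertex has `r` pairwise nonadjacent neighbours. -/
def K1rFree (G : SimpleGraph V) (r : ℕ) : Prop :=
  ¬ ∃ (v : V) (A : Finset V), (∀ a ∈ A, G.Adj v a) ∧
      (∀ a ∈ A, ∀ b ∈ A, a ≠ b → ¬ G.Adj a b) ∧ A.card = r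

/-!
In a 2-regular graph on `n` vertices, an independent set `S` sends all `2|S|` edges at its
vertices to the complement, which absorbs at most `2(n - |S|)` of them, so `2α ≤ n`.
A dominating set `D` covers every vertex by a closed neighbourhood of size `3`, so `n ≤ 3γ`.
-/

section

variable [Fintype V] (G : SimpleGraph V)

theorem exists_isIndepFinset_card_eq_indepNum :
    ∃ S : Finset V, IsIndepFinset G S ∧ #S = indepNum G := by
  have hne : {n | ∃ S : Finset V, IsIndepFinset G S ∧ #S = n}.Nonempty :=
    ⟨0, ∅, by simp [IsIndepFinset], card_empty⟩
  have hbdd : BddAbove {n | ∃ S : Finset V, IsIndepFinset G S ∧ #S = n} := by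
    refine ⟨Fintype.card V, ?_⟩
    rintro _ ⟨S, -, rfl⟩
    exact card_le_univ S
  exact Nat.sSup_mem hne hbdd

theorem exists_isDomFinset_card_eq_domNum :
    ∃ D : Finset V, IsDomFinset G D ∧ #D = domNum G :=
  Nat.sInf_mem (s := {n | ∃ D : Finset V, IsDomFinset G D ∧ #D = n})
    ⟨_, univ, fun v hv => absurd (mem_univ v) hv, rfl⟩

variable {G} [DecidableRel G.Adj]

open SimpleGraph

theorem IsIndepFinset.two_mul_card_le {d : ℕ} (hreg : G.IsRegularOfDegree d) (hd : 0 < d)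
    {S : Finset V} (hS : IsIndepFinset G S) : 2 * #S ≤ Fintype.card V := by
  classical
  have hout : ∀ s ∈ S, d ≤ #((univ \ S).bipartiteAbove G.Adj s) := fun s hs => by
    have : (univ \ S).bipartiteAbove G.Adj s = G.neighborFinset s := by
      ext v
      simp only [mem_bipartiteAbove, mem_sdiff, mem_univ, true_and, mem_neighborFinset,
        and_iff_right_iff_imp]
      exact fun hsv hv => hS s hs v hv hsv
    rw [this, card_neighborFinset_eq_degree, hreg s]
  have hin : ∀ v ∈ univ \ S, #(S.bipartiteBelow G.Adj v) ≤ d := fun v _ => by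
    rw [← hreg v, ← card_neighborFinset_eq_degree]
    exact card_le_card fun s hs =>
      (G.mem_neighborFinset v s).2 ((mem_bipartiteBelow _).1 hs).2.symm
  have hcard : #S ≤ #(univ \ S) :=
    le_of_mul_le_mul_right (card_mul_le_card_mul G.Adj hout hin) hd
  rw [card_univ_sdiff] at hcard
  have := card_le_univ S
  omega

theorem IsDomFinset.card_le_mul_maxDegree_add_one {D : Finset V} (hD : IsDomFinset G D) :
    Fintype.card V ≤ (G.maxDegree + 1) * #D := by
  classical
  have hcover : univ ⊆ D.biUnion fun d => insert d (G.neighborFinset d) := fun v _ => by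
    by_cases hv : v ∈ D
    · exact mem_biUnion.2 ⟨v, hv, mem_insert_self v _⟩
    · obtain ⟨u, hu, huv⟩ := hD v hv
      exact mem_biUnion.2 ⟨u, hu, mem_insert_of_mem ((G.mem_neighborFinset u v).2 huv)⟩
  have hball : ∀ d ∈ D, #(insert d (G.neighborFinset d)) ≤ G.maxDegree + 1 := fun d _ =>
    (card_insert_le _ _).trans (by rw [card_neighborFinset_eq_degree]; simp [degree_le_maxDegree])
  rw [mul_comm, ← card_univ]
  exact (card_le_card hcover).trans (card_biUnion_le_card_mul _ _ _ hball)

end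

/-- A 2-regular graph satisfies 2·α(G) ≤ 3·γ(G). -/
theorem stmt7 [Fintype V] (G : SimpleGraph V) [DecidableRel G.Adj] (hreg : G.IsRegularOfDegree 2) :
    2 * indepNum G ≤ 3 * domNum G := by
  obtain ⟨S, hS, hScard⟩ := exists_isIndepFinset_card_eq_indepNum G
  obtain ⟨D, hD, hDcard⟩ := exists_isDomFinset_card_eq_domNum G
  have hmax : G.maxDegree ≤ 2 := G.maxDegree_le_of_forall_degree_le 2 fun v => (hreg v).le
  calc 2 * indepNum G = 2 * #S := by rw [hScard]
    _ ≤ Fintype.card V := hS.two_mul_card_le hreg two_pos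
    _ ≤ (G.maxDegree + 1) * #D := hD.card_le_mul_maxDegree_add_one
    _ ≤ 3 * domNum G := by rw [hDcard]; gcongr; omega
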